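/- Let X = (I, P) and Y = (J, Q) be PCSs. Define P(X⊗Y) = {u ⊗ v | u ∈ P, v ∈ Q}^⊥⊥ ⊆ (ℝ≥0)^{I×J}, where (u ⊗ v)_{(a,b)} = u_a · v_b. Then X⊗Y = (I × J, P(X⊗Y)) is a PCS: for every (a,b) ∈ I × J there exists w ∈ P(X⊗Y) with w_{(a,b)} > 0, and for every (a,b) there exists A > 0 with w_{(a,b)} ≤ A for all w ∈ P(X⊗Y). -/
import Mathlib


open scoped NNReal ENNReal

/-- The pairing `⟨u,u'⟩ = ∑' i, u i * u' i` in `[0,∞]`. -/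
noncomputable def pairing {I : Type*} (u u' : I → ℝ≥0) : ℝ≥0∞ :=
  ∑' i, (u i : ℝ≥0∞) * (u' i : ℝ≥0∞)

/-- The polar of a set of nonnegative vectors. -/
def polar {I : Type*} (X : Set (I → ℝ≥0)) : Set (I → ℝ≥0) :=
  {u' | ∀ u ∈ X, pairing u u' ≤ 1}

/-- A probabilistic coherence space structure on the set `P`. -/
def IsPCS {I : Type*} (P : Set (I → ℝ≥0)) : Prop :=
  polar (polar P) = P ∧
  (∀ a : I, ∃ u ∈ P, 0 < u a) ∧
  (∀ a : I, ∃ A : ℝ≥0, 0 < A ∧ ∀ u ∈ P, u a ≤ A)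

lemma pairing_comm {I : Type*} (u u' : I → ℝ≥0) : pairing u u' = pairing u' u := by
  unfold pairing; exact tsum_congr fun i => mul_comm _ _

lemma subset_bipolar {I : Type*} (X : Set (I → ℝ≥0)) : X ⊆ polar (polar X) := by
  intro u hu u' hu'
  rw [pairing_comm]
  exact hu' u hu

lemma polar_antitone {I : Type*} {X Y : Set (I → ℝ≥0)} (h : X ⊆ Y) : polar Y ⊆ polar X :=
  fun u' hu' u hu => hu' u (h hu)

lemma tripolar {I : Type*} (X : Set (I → ℝ≥0)) :
    polar (polar (polar X)) = polar X :=
  le_antisymm (polar_antitone (subset_bipolar X)) (subset_bipolar (polar X))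

theorem tensor_isPCS {I J : Type*} [Countable I] [Countable J]
    (P : Set (I → ℝ≥0)) (Q : Set (J → ℝ≥0)) (hP : IsPCS P) (hQ : IsPCS Q) :
    IsPCS (polar (polar {w : I × J → ℝ≥0 | ∃ u ∈ P, ∃ v ∈ Q, w = fun p => u p.1 * v p.2})) := by
  obtain ⟨-, hP2, hP3⟩ := hP
  obtain ⟨-, hQ2, hQ3⟩ := hQ
  set X : Set (I × J → ℝ≥0) :=
    {w : I × J → ℝ≥0 | ∃ u ∈ P, ∃ v ∈ Q, w = fun p => u p.1 * v p.2} with hX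
  refine ⟨tripolar _, ?_, ?_⟩
  · rintro ⟨a, b⟩
    obtain ⟨u, hu, hua⟩ := hP2 a
    obtain ⟨v, hv, hvb⟩ := hQ2 b
    exact ⟨_, subset_bipolar X ⟨u, hu, v, hv, rfl⟩, mul_pos hua hvb⟩
  · rintro ⟨a, b⟩
    classical
    obtain ⟨A, hA, hAu⟩ := hP3 a
    obtain ⟨B, hB, hBv⟩ := hQ3 b
    refine ⟨A * B, mul_pos hA hB, ?_⟩
    intro w hw
    set w' : I × J → ℝ≥0 := fun p => if p = (a, b) then (A * B)⁻¹ else 0 with hw'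
    have hABne : ((A * B : ℝ≥0) : ℝ≥0∞) ≠ 0 := ENNReal.coe_ne_zero.mpr (mul_pos hA hB).ne'
    have hw'pol : w' ∈ polar X := by
      rintro _ ⟨u, hu, v, hv, rfl⟩
      have hs : pairing (fun p : I × J => u p.1 * v p.2) w'
          = ((u a * v b : ℝ≥0) : ℝ≥0∞) * (((A * B)⁻¹ : ℝ≥0) : ℝ≥0∞) := by
        unfold pairing
        rw [tsum_eq_single (a, b)]
        · simp [hw']
        · intro p hp; simp [hw', hp]
      rw [hs]
      have h1 : ((u a * v b : ℝ≥0) : ℝ≥0∞) ≤ ((A * B : ℝ≥0) : ℝ≥0∞) :=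
        ENNReal.coe_le_coe.mpr (mul_le_mul' (hAu u hu) (hBv v hv))
      calc ((u a * v b : ℝ≥0) : ℝ≥0∞) * (((A * B)⁻¹ : ℝ≥0) : ℝ≥0∞)
          ≤ ((A * B : ℝ≥0) : ℝ≥0∞) * (((A * B)⁻¹ : ℝ≥0) : ℝ≥0∞) :=
            mul_le_mul_left h1 _
        _ = 1 := by
            rw [ENNReal.coe_inv (mul_pos hA hB).ne',
              ENNReal.mul_inv_cancel hABne ENNReal.coe_ne_top]
    have hpair := hw w' hw'pol
    have hs : pairing w' w = (((A * B)⁻¹ : ℝ≥0) : ℝ≥0∞) * (w (a, b) : ℝ≥0∞) := by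
      unfold pairing
      rw [tsum_eq_single (a, b)]
      · simp [hw']
      · intro p hp; simp [hw', hp]
    rw [hs, ENNReal.coe_inv (mul_pos hA hB).ne',
      ENNReal.inv_mul_le_iff hABne ENNReal.coe_ne_top, mul_one] at hpair
    exact_mod_cast hpair
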